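/- arXiv:2307.13921 — 3 statements merged into one kernel-verified Lean document; each statement's English description precedes it below -/
import Mathlib

section
/- Fix ε > 0 and p > 0. There exists d₀ > 0 such that for every real d ≥ d₀ there exist c > 0 and n₀ such that for every n ≥ n₀ and every fixed subset S of L ∪ R with |S∩L| ≤ p·(log d/d)·n and |S∩R| ≤ p·(log d/d)·n, the probability that G^{bip}_{n,d} contains an independent set S′ with |S′∩S∩L| ≥ ε·(log d/d)·n and |S′∩S∩R| ≥ ε·(log d/d)·n is at most exp(−c·n). -/
/-!
An independent set meeting both `S ∩ L` and `S ∩ R` in at least `a = ⌈ε (log d / d) n⌉` vertices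
contains `a`-subsets `X ⊆ S ∩ L`, `Y ⊆ S ∩ R` with no edge between them. There are at most
`2^{|S|} ≤ 2^{2p (log d / d) n}` such pairs, and each has probability
`(1 - d/n)^{a²} ≤ exp(-ε² log² d / d · n)`.
Once `ε² log d ≥ 4 p log 2`, the union bound is at most `exp(-ε² log² d / (2d) · n)`.
-/

open MeasureTheory Real Filter

noncomputable section

/-- Bernoulli measure on `Bool` with success probability `p`. -/
def coin (p : ℝ) : Measure Bool :=
  ENNReal.ofReal p • Measure.dirac true + ENNReal.ofReal (1 - p) • Measure.dirac false

/-- The random bipartite graph `G^bip_{n,d}`, as a product (Bernoulli(d/n)) measure on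
edge-indicator vectors indexed by the `n * n` possible edges. -/
def edgeMeasure (n : ℕ) (d : ℝ) : Measure (Fin (n * n) → Bool) :=
  Measure.pi fun _ => coin (d / n)

/-- Vertex set: the left class `L` is `Sum.inl`, the right class `R` is `Sum.inr`. -/
abbrev Vtx (n : ℕ) := Fin n ⊕ Fin n

/-- Adjacency in the bipartite graph with edge-indicator vector `A`:
`i ∈ L` and `j ∈ R` are adjacent iff the indicator of the edge `(i,j)` is `true`. -/
def adjB (n : ℕ) (A : Fin (n * n) → Bool) : Vtx n → Vtx n → Prop
  | Sum.inl i, Sum.inr j => A (finProdFinEquiv (i, j)) = true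
  | Sum.inr j, Sum.inl i => A (finProdFinEquiv (i, j)) = true
  | _, _ => False

/-- `S` is an independent set of the bipartite graph encoded by `A`. -/
def IsIndepSet (n : ℕ) (A : Fin (n * n) → Bool) (S : Set (Vtx n)) : Prop :=
  ∀ u ∈ S, ∀ v ∈ S, ¬ adjB n A u v

/-- `S ∩ L`. -/
def leftPart {n : ℕ} (S : Set (Vtx n)) : Set (Vtx n) := S ∩ Set.range Sum.inl

/-- `S ∩ R`. -/
def rightPart {n : ℕ} (S : Set (Vtx n)) : Set (Vtx n) := S ∩ Set.range Sum.inr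

/-- `S` is `γ`-balanced: `| |S ∩ L| - γ|S| | < 1`. -/
def IsBalanced (γ : ℝ) {n : ℕ} (S : Set (Vtx n)) : Prop :=
  |((leftPart S).ncard : ℝ) - γ * (S.ncard : ℝ)| < 1

lemma coin_singleton_false (q : ℝ) : coin q {false} = ENNReal.ofReal (1 - q) := by
  simp [coin]

lemma isProbabilityMeasure_coin {q : ℝ} (hq₀ : 0 ≤ q) (hq₁ : q ≤ 1) :
    IsProbabilityMeasure (coin q) :=
  ⟨by simp [coin, ← ENNReal.ofReal_add hq₀ (sub_nonneg.2 hq₁)]⟩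

lemma measure_pi_coin_forall_eq_false {ι : Type*} [Fintype ι] {q : ℝ} (hq₀ : 0 ≤ q) (hq₁ : q ≤ 1)
    (E : Finset ι) :
    Measure.pi (fun _ : ι => coin q) {A | ∀ e ∈ E, A e = false} =
      ENNReal.ofReal (1 - q) ^ E.card := by
  have := isProbabilityMeasure_coin hq₀ hq₁
  change Measure.pi _ ((E : Set ι).pi fun _ => {false}) = _
  simp [coin_singleton_false]

section Counting

variable {n : ℕ}

open Classical in
def leftIdx (S : Set (Vtx n)) : Finset (Fin n) := Finset.univ.filter fun i => Sum.inl i ∈ S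

open Classical in
def rightIdx (S : Set (Vtx n)) : Finset (Fin n) := Finset.univ.filter fun j => Sum.inr j ∈ S

lemma ncard_leftPart (S : Set (Vtx n)) : (leftPart S).ncard = (leftIdx S).card := by
  have : leftPart S = Sum.inl '' (leftIdx S : Set (Fin n)) := by
    ext (i | j) <;> simp [leftPart, leftIdx]
  rw [this, Set.ncard_image_of_injective _ Sum.inl_injective, Set.ncard_coe_finset]

lemma ncard_rightPart (S : Set (Vtx n)) : (rightPart S).ncard = (rightIdx S).card := by
  have : rightPart S = Sum.inr '' (rightIdx S : Set (Fin n)) := by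
    ext (i | j) <;> simp [rightPart, rightIdx]
  rw [this, Set.ncard_image_of_injective _ Sum.inr_injective, Set.ncard_coe_finset]

def NoEdgeBetween (A : Fin (n * n) → Bool) (X Y : Finset (Fin n)) : Prop :=
  ∀ e ∈ (X ×ˢ Y).map finProdFinEquiv.toEmbedding, A e = false

lemma exists_noEdgeBetween_of_isIndepSet {A : Fin (n * n) → Bool} {S S' : Set (Vtx n)} {a : ℕ}
    (hS' : IsIndepSet n A S') (hL : a ≤ (leftPart (S' ∩ S)).ncard)
    (hR : a ≤ (rightPart (S' ∩ S)).ncard) :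
    ∃ X ∈ (leftIdx S).powersetCard a, ∃ Y ∈ (rightIdx S).powersetCard a, NoEdgeBetween A X Y := by
  rw [ncard_leftPart] at hL
  rw [ncard_rightPart] at hR
  obtain ⟨X, hX, hXcard⟩ := Finset.exists_subset_card_eq hL
  obtain ⟨Y, hY, hYcard⟩ := Finset.exists_subset_card_eq hR
  have hXS : ∀ i ∈ X, Sum.inl i ∈ S' ∩ S := by simpa [Finset.subset_iff, leftIdx] using hX
  have hYS : ∀ j ∈ Y, Sum.inr j ∈ S' ∩ S := by simpa [Finset.subset_iff, rightIdx] using hY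
  refine ⟨X, ?_, Y, ?_, ?_⟩
  · exact Finset.mem_powersetCard.2
      ⟨fun i hi => by simp [leftIdx, (hXS i hi).2], hXcard⟩
  · exact Finset.mem_powersetCard.2
      ⟨fun j hj => by simp [rightIdx, (hYS j hj).2], hYcard⟩
  · simp only [NoEdgeBetween, Finset.mem_map, Finset.mem_product, Prod.exists]
    rintro _ ⟨i, j, ⟨hi, hj⟩, rfl⟩
    simpa [adjB] using hS' _ (hXS i hi).1 _ (hYS j hj).1

lemma edgeMeasure_noEdgeBetween {d : ℝ} (hd₀ : 0 ≤ d) (hdn : d ≤ n) (X Y : Finset (Fin n)) :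
    edgeMeasure n d {A | NoEdgeBetween A X Y} =
      ENNReal.ofReal (1 - d / n) ^ (X.card * Y.card) := by
  unfold edgeMeasure NoEdgeBetween
  rw [measure_pi_coin_forall_eq_false (by positivity) (div_le_one_of_le₀ hdn n.cast_nonneg),
    Finset.card_map, Finset.card_product]

lemma edgeMeasure_exists_noEdgeBetween_le {d : ℝ} (hd₀ : 0 ≤ d) (hdn : d ≤ n)
    (U V : Finset (Fin n)) (a : ℕ) :
    edgeMeasure n d {A | ∃ X ∈ U.powersetCard a, ∃ Y ∈ V.powersetCard a, NoEdgeBetween A X Y} ≤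
      2 ^ (U.card + V.card) * ENNReal.ofReal (1 - d / n) ^ (a * a) := by
  have hunion : {A | ∃ X ∈ U.powersetCard a, ∃ Y ∈ V.powersetCard a, NoEdgeBetween A X Y} =
      ⋃ X ∈ U.powersetCard a, ⋃ Y ∈ V.powersetCard a, {A | NoEdgeBetween A X Y} := by
    ext; simp only [Set.mem_ofPred_eq, Set.mem_iUnion, exists_prop]
  calc _ ≤ ∑ X ∈ U.powersetCard a, ∑ Y ∈ V.powersetCard a,
        edgeMeasure n d {A | NoEdgeBetween A X Y} := by
        rw [hunion]
        refine (measure_biUnion_finset_le _ _).trans (Finset.sum_le_sum fun X _ => ?_)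
        exact measure_biUnion_finset_le _ _
    _ = (U.card.choose a * V.card.choose a : ℕ) * ENNReal.ofReal (1 - d / n) ^ (a * a) := by
        simp_rw [edgeMeasure_noEdgeBetween hd₀ hdn]
        rw [Finset.sum_congr rfl fun X hX => Finset.sum_congr rfl fun Y hY => by
          rw [(Finset.mem_powersetCard.1 hX).2, (Finset.mem_powersetCard.1 hY).2]]
        simp [Finset.card_powersetCard, mul_assoc]
    _ ≤ 2 ^ (U.card + V.card) * ENNReal.ofReal (1 - d / n) ^ (a * a) := by
        gcongr
        rw [pow_add]
        exact_mod_cast Nat.mul_le_mul (Nat.choose_le_two_pow _ _) (Nat.choose_le_two_pow _ _)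

end Counting

lemma two_pow_mul_ofReal_one_sub_pow_le (k m : ℕ) (q : ℝ) :
    (2 : ENNReal) ^ k * ENNReal.ofReal (1 - q) ^ m ≤ ENNReal.ofReal (exp (k * log 2 - q * m)) := by
  have h2 : (2 : ENNReal) ^ k = ENNReal.ofReal (exp (k * log 2)) := by
    rw [exp_nat_mul, exp_log two_pos, ENNReal.ofReal_pow zero_le_two, ENNReal.ofReal_ofNat]
  calc (2 : ENNReal) ^ k * ENNReal.ofReal (1 - q) ^ m
      ≤ ENNReal.ofReal (exp (k * log 2)) * ENNReal.ofReal (exp (-q)) ^ m := by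
        rw [h2]
        gcongr
        linarith [add_one_le_exp (-q)]
    _ = ENNReal.ofReal (exp (k * log 2 - q * m)) := by
        rw [← ENNReal.ofReal_pow (exp_nonneg _), ← ENNReal.ofReal_mul (exp_nonneg _),
          ← exp_nat_mul, ← exp_add]
        ring_nf

lemma union_bound_exponent_le {ε p d : ℝ} {n k a : ℕ} (hε : 0 < ε) (hd : 0 < d) (hn : 0 < n)
    (hlog : 4 * p * log 2 ≤ ε ^ 2 * log d) (hlog₀ : 0 ≤ log d)
    (hk : (k : ℝ) ≤ 2 * p * (log d / d) * n) (ha : ε * (log d / d) * n ≤ a) :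
    k * log 2 - d / n * ↑(a * a) ≤ -(ε ^ 2 * log d ^ 2 / (2 * d)) * n := by
  have hn' : (0 : ℝ) < n := Nat.cast_pos.2 hn
  have hsq : ε ^ 2 * log d ^ 2 / d * n ≤ d / n * ↑(a * a) := by
    calc ε ^ 2 * log d ^ 2 / d * n = d / n * (ε * (log d / d) * n) ^ 2 := by
          field_simp
      _ ≤ d / n * ↑(a * a) := by
          push_cast
          rw [← sq]
          gcongr
  have hk' : k * log 2 ≤ 2 * p * log 2 * (log d / d) * n := by
    nlinarith [log_pos one_lt_two]
  have hslack : 0 ≤ log d / d * n * (ε ^ 2 * log d - 4 * p * log 2) := by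
    have := sub_nonneg.2 hlog
    positivity
  have hgap : -(ε ^ 2 * log d ^ 2 / (2 * d)) * n
      - (2 * p * log 2 * (log d / d) * n - ε ^ 2 * log d ^ 2 / d * n) =
      log d / d * n * (ε ^ 2 * log d - 4 * p * log 2) / 2 := by
    field_simp; ring
  linarith

/-- Fix `ε > 0` and `p > 0`. There exists `d₀ > 0` such that for all `d ≥ d₀`
there exist `c > 0` and `n₀` such that for every `n ≥ n₀` and every fixed `S ⊆ L ∪ R` with
`|S∩L|, |S∩R| ≤ p·(log d/d)·n`, the probability that `G^bip_{n,d}` contains an independent set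
`S'` with `|S'∩S∩L| ≥ ε·(log d/d)·n` and `|S'∩S∩R| ≥ ε·(log d/d)·n` is at most `exp(−c·n)`. -/
theorem stmt4 (ε p : ℝ) (hε : 0 < ε) (hp : 0 < p) :
    ∃ d₀ : ℝ, 0 < d₀ ∧ ∀ d : ℝ, d₀ ≤ d →
      ∃ c : ℝ, 0 < c ∧ ∃ n₀ : ℕ, ∀ n : ℕ, n₀ ≤ n →
        ∀ S : Set (Vtx n),
          ((leftPart S).ncard : ℝ) ≤ p * (Real.log d / d) * n →
          ((rightPart S).ncard : ℝ) ≤ p * (Real.log d / d) * n →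
          edgeMeasure n d
              {A | ∃ S' : Set (Vtx n), IsIndepSet n A S' ∧
                ε * (Real.log d / d) * n ≤ ((leftPart (S' ∩ S)).ncard : ℝ) ∧
                ε * (Real.log d / d) * n ≤ ((rightPart (S' ∩ S)).ncard : ℝ)}
            ≤ ENNReal.ofReal (Real.exp (-c * n)) := by
  refine ⟨exp (4 * p * log 2 / ε ^ 2), exp_pos _, fun d hd => ?_⟩
  have hd_pos : 0 < d := (exp_pos _).trans_le hd
  have hlog_ge : 4 * p * log 2 / ε ^ 2 ≤ log d := (le_log_iff_exp_le hd_pos).2 hd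
  have hlog : 4 * p * log 2 ≤ ε ^ 2 * log d := by
    rwa [div_le_iff₀ (by positivity), mul_comm (log d)] at hlog_ge
  have hlog_pos : 0 < log d := lt_of_lt_of_le (by positivity) hlog_ge
  refine ⟨ε ^ 2 * log d ^ 2 / (2 * d), by positivity, ⌈d⌉₊ ⊔ 1, fun n hn S hSL hSR => ?_⟩
  have hdn : d ≤ n := (Nat.le_ceil d).trans (by exact_mod_cast le_sup_left.trans hn)
  have hn_pos : 0 < n := le_sup_right.trans hn
  set a := ⌈ε * (log d / d) * n⌉₊
  have hk : ((leftIdx S).card + (rightIdx S).card : ℕ) ≤ 2 * p * (log d / d) * n := by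
    rw [ncard_leftPart] at hSL
    rw [ncard_rightPart] at hSR
    push_cast
    linarith
  calc _ ≤ edgeMeasure n d {A | ∃ X ∈ (leftIdx S).powersetCard a,
        ∃ Y ∈ (rightIdx S).powersetCard a, NoEdgeBetween A X Y} :=
        measure_mono <| by
          rintro A ⟨S', hS', hL, hR⟩
          exact exists_noEdgeBetween_of_isIndepSet hS' (Nat.ceil_le.2 hL) (Nat.ceil_le.2 hR)
    _ ≤ 2 ^ ((leftIdx S).card + (rightIdx S).card) * ENNReal.ofReal (1 - d / n) ^ (a * a) :=
        edgeMeasure_exists_noEdgeBetween_le hd_pos.le hdn _ _ a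
    _ ≤ _ := two_pow_mul_ofReal_one_sub_pow_le _ _ _
    _ ≤ _ := ENNReal.ofReal_le_ofReal <| exp_le_exp.2 <|
        union_bound_exponent_le hε hd_pos hn_pos hlog hlog_pos.le hk (Nat.le_ceil _)
end
end

section
/- Fix γ ∈ (0,1/2], an integer n ≥ 1 and a real d with 1 < d ≤ n such that m′ = ⌊d/(log d)²⌋ ≥ 1, and let n′ = ⌊n/m′⌋. Let β denote the size of the largest γ-balanced P-independent set of G^{bip}_{n,d} and let β̄ = E[β]. Then for every t > 0, P[ |β − β̄| ≥ t ] ≤ 2·exp( −t² / (4·n′·(1+1/γ)²) ). In particular, whenever n′ ≤ n·(log d)²/d this gives P[ |β − β̄| ≥ t ] ≤ 2·exp( −t²·d / (4·(1+1/γ)²·(log d)²·n) ). -/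
open MeasureTheory Real Filter

noncomputable section

/-- Block size `m′ = ⌊d/(log d)²⌋`. -/
def mblock (d : ℝ) : ℕ := ⌊d / (Real.log d) ^ 2⌋₊

/-- The 0-based index of a vertex within its side of the bipartition. -/
def vidx {n : ℕ} : Vtx n → ℕ
  | Sum.inl i => (i : ℕ)
  | Sum.inr j => (j : ℕ)

/-- `S` is contained in the union of the `n′ = ⌊n/m′⌋` blocks of size `m′` on each side. -/
def InBlocks (n m' : ℕ) (S : Set (Vtx n)) : Prop :=
  ∀ v ∈ S, vidx v < (n / m') * m'

/-- `S` contains at most one vertex from each block (on each side): vertices `i, j` of the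
same side lie in the same block iff `i / m′ = j / m′`. -/
def OnePerBlock (n m' : ℕ) (S : Set (Vtx n)) : Prop :=
  (∀ i j : Fin n, Sum.inl i ∈ S → Sum.inl j ∈ S → (i : ℕ) / m' = (j : ℕ) / m' → i = j) ∧
  (∀ i j : Fin n, Sum.inr i ∈ S → Sum.inr j ∈ S → (i : ℕ) / m' = (j : ℕ) / m' → i = j)

/-- `S` is a `γ`-balanced `P`-independent set of the graph encoded by `A`. -/
def IsPBalIndep (γ : ℝ) (n m' : ℕ) (A : Fin (n * n) → Bool) (S : Set (Vtx n)) : Prop :=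
  IsIndepSet n A S ∧ IsBalanced γ S ∧ InBlocks n m' S ∧ OnePerBlock n m' S

/-- `β(A)`: the size of the largest `γ`-balanced `P`-independent set of the graph `A`. -/
def betaFn (γ : ℝ) (n m' : ℕ) (A : Fin (n * n) → Bool) : ℕ :=
  sSup {k | ∃ S : Set (Vtx n), IsPBalIndep γ n m' A S ∧ S.ncard = k}

/-!
Resampling the edges of a single block changes `β` by at most `2 + 1/γ`: deleting the (at most
two) vertices of that block from an optimal set leaves an independent set of the new graph, and
rebalancing it costs at most `1/γ` further vertices. Group the `n²` edge indicators into `n′`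
blocks, the edge `(i, j)` going to block `min ⌊i/m′⌋ ⌊j/m′⌋`. McDiarmid's inequality, obtained by
exposing one block at a time and applying Hoeffding's lemma to the conditional increments, then
makes `β - β̄` sub-Gaussian with variance proxy `n′(2 + 1/γ)²/4 ≤ 2n′(1 + 1/γ)²`.
-/

open ProbabilityTheory NNReal

namespace ProbabilityTheory.HasSubgaussianMGF

variable {Ω : Type*} [MeasurableSpace Ω] {μ : Measure Ω} {X : Ω → ℝ} {c : ℝ≥0}

lemma mono (h : HasSubgaussianMGF X c μ) {c' : ℝ≥0} (hc : c ≤ c') :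
    HasSubgaussianMGF X c' μ where
  integrable_exp_mul := h.integrable_exp_mul
  mgf_le t := (h.mgf_le t).trans (by gcongr)

lemma measure_abs_ge_le [IsFiniteMeasure μ] (h : HasSubgaussianMGF X c μ) {s ε : ℝ}
    (hcs : (c : ℝ) ≤ s) (hε : 0 ≤ ε) :
    μ {ω | ε ≤ |X ω|} ≤ ENNReal.ofReal (2 * exp (-ε ^ 2 / (2 * s))) := by
  have hs : HasSubgaussianMGF X s.toNNReal μ :=
    h.mono (by simpa using Real.toNNReal_le_toNNReal hcs)
  have htail : ∀ Y : Ω → ℝ, HasSubgaussianMGF Y s.toNNReal μ →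
      μ {ω | ε ≤ Y ω} ≤ ENNReal.ofReal (exp (-ε ^ 2 / (2 * s))) := fun Y hY => by
    rw [← ofReal_measureReal]
    gcongr
    simpa [Real.coe_toNNReal _ (c.coe_nonneg.trans hcs)] using hY.measure_ge_le hε
  calc μ {ω | ε ≤ |X ω|} ≤ μ ({ω | ε ≤ X ω} ∪ {ω | ε ≤ (-X) ω}) := by
        refine measure_mono fun ω hω => ?_
        simpa [le_abs] using hω
    _ ≤ μ {ω | ε ≤ X ω} + μ {ω | ε ≤ (-X) ω} := measure_union_le _ _
    _ ≤ ENNReal.ofReal (exp (-ε ^ 2 / (2 * s))) + ENNReal.ofReal (exp (-ε ^ 2 / (2 * s))) :=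
        add_le_add (htail X hs) (htail _ hs.neg)
    _ = ENNReal.ofReal (2 * exp (-ε ^ 2 / (2 * s))) := by
        rw [← ENNReal.ofReal_add (by positivity) (by positivity), ← two_mul]

end ProbabilityTheory.HasSubgaussianMGF

lemma abs_integral_sub_integral_le {Ω : Type*} [MeasurableSpace Ω] {μ : Measure Ω}
    [IsProbabilityMeasure μ] {g h : Ω → ℝ} (hg : Integrable g μ) (hh : Integrable h μ) {C : ℝ}
    (hC : ∀ x, |g x - h x| ≤ C) : |∫ x, g x ∂μ - ∫ x, h x ∂μ| ≤ C := by
  rw [← integral_sub hg hh, ← Real.norm_eq_abs]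
  simpa using norm_integral_le_of_norm_le_const (μ := μ) (f := fun x => g x - h x)
    (ae_of_all _ fun x => (Real.norm_eq_abs _).trans_le (hC x))

lemma hasSubgaussianMGF_sub_integral_of_abs_sub_le {Ω : Type*} [MeasurableSpace Ω] [Finite Ω]
    [MeasurableSingletonClass Ω] (μ : Measure Ω) [IsProbabilityMeasure μ] {f : Ω → ℝ} {c : ℝ≥0}
    (hf : ∀ x y, |f x - f y| ≤ c) :
    HasSubgaussianMGF (fun x => f x - ∫ y, f y ∂μ) ((c / 2) ^ 2) μ := by
  have hbdd : BddBelow (Set.range f) := (Set.finite_range f).bddBelow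
  have hIcc : ∀ x, f x ∈ Set.Icc (⨅ y, f y) ((⨅ y, f y) + c) := fun x =>
    have : Nonempty Ω := ⟨x⟩
    ⟨ciInf_le hbdd x,
      sub_le_iff_le_add.mp (le_ciInf fun y => by linarith [(abs_le.mp (hf x y)).2])⟩
  simpa using hasSubgaussianMGF_of_mem_Icc (measurable_of_finite f).aemeasurable
    (ae_of_all μ hIcc)

lemma hasSubgaussianMGF_sub_integral_prod {Ω₁ Ω₂ : Type*} [MeasurableSpace Ω₁]
    [MeasurableSpace Ω₂] [Finite Ω₁] [Finite Ω₂] [MeasurableSingletonClass Ω₁]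
    [MeasurableSingletonClass Ω₂] {μ₁ : Measure Ω₁} {μ₂ : Measure Ω₂} [IsProbabilityMeasure μ₁]
    [IsProbabilityMeasure μ₂] {f : Ω₁ × Ω₂ → ℝ} {c₁ c₂ : ℝ≥0}
    (h₁ : ∀ y, HasSubgaussianMGF (fun x => f (x, y) - ∫ x', f (x', y) ∂μ₁) c₁ μ₁)
    (h₂ : HasSubgaussianMGF (fun y => ∫ x, f (x, y) ∂μ₁ - ∫ y', ∫ x, f (x, y') ∂μ₁ ∂μ₂) c₂ μ₂) :
    HasSubgaussianMGF (fun z => f z - ∫ z', f z' ∂μ₁.prod μ₂) (c₁ + c₂) (μ₁.prod μ₂) where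
  integrable_exp_mul _ := Integrable.of_finite
  mgf_le t := by
    set F := fun y => ∫ x, f (x, y) ∂μ₁
    set m := ∫ y, F y ∂μ₂
    have hm : ∫ z, f z ∂μ₁.prod μ₂ = m := integral_prod_symm f Integrable.of_finite
    calc mgf (fun z => f z - ∫ z', f z' ∂μ₁.prod μ₂) (μ₁.prod μ₂) t
        = ∫ y, exp (t * (F y - m)) * mgf (fun x => f (x, y) - F y) μ₁ t ∂μ₂ := by
          simp only [mgf]
          rw [hm, integral_prod_symm _ Integrable.of_finite]
          refine integral_congr_ae (ae_of_all _ fun y => ?_)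
          dsimp only
          rw [← integral_const_mul]
          congr 1 with x
          rw [← exp_add]
          ring_nf
      _ ≤ ∫ y, exp (t * (F y - m)) * exp (c₁ * t ^ 2 / 2) ∂μ₂ :=
          integral_mono Integrable.of_finite Integrable.of_finite fun y =>
            mul_le_mul_of_nonneg_left ((h₁ y).mgf_le t) (exp_nonneg _)
      _ = mgf (fun y => F y - m) μ₂ t * exp (c₁ * t ^ 2 / 2) := integral_mul_const _ _
      _ ≤ exp (c₂ * t ^ 2 / 2) * exp (c₁ * t ^ 2 / 2) := by
          gcongr
          exact h₂.mgf_le t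
      _ = exp ((c₁ + c₂ : ℝ≥0) * t ^ 2 / 2) := by
          rw [← exp_add]
          push_cast
          ring_nf

theorem hasSubgaussianMGF_sub_integral_pi_of_bounded_differences {ι α : Type*} [Fintype ι]
    [MeasurableSpace α] [Finite α] [MeasurableSingletonClass α] {N : ℕ}
    (ν : ι → Measure α) [∀ i, IsProbabilityMeasure (ν i)] (block : ι → Fin N)
    {f : (ι → α) → ℝ} {c : Fin N → ℝ≥0}
    (hf : ∀ k x y, (∀ i, block i ≠ k → x i = y i) → |f x - f y| ≤ c k) :
    HasSubgaussianMGF (fun x => f x - ∫ y, f y ∂Measure.pi ν) (∑ k, (c k / 2) ^ 2)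
      (Measure.pi ν) := by
  induction N generalizing ι with
  | zero =>
    have : IsEmpty ι := ⟨fun i => (block i).elim0⟩
    have hconst : ∀ x, f x - ∫ y, f y ∂Measure.pi ν = 0 := fun x => by
      rw [integral_congr_ae (ae_of_all _ fun y => congrArg f (Subsingleton.elim y x))]
      simp
    simpa only [hconst, Finset.univ_eq_empty, Finset.sum_empty] using
      HasSubgaussianMGF.fun_zero
  | succ N ih =>
    classical
    let p : ι → Prop := fun i => block i = Fin.last N
    let μ₁ := Measure.pi fun i : Subtype p => ν i
    let μ₂ := Measure.pi fun i : {i // ¬p i} => ν i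
    let E := MeasurableEquiv.piEquivPiSubtypeProd (fun _ : ι => α) p
    have hE : MeasurePreserving E (Measure.pi ν) (μ₁.prod μ₂) :=
      measurePreserving_piEquivPiSubtypeProd ν p
    have hE_symm : ∀ x y i, E.symm (x, y) i = if h : p i then x ⟨i, h⟩ else y ⟨i, h⟩ :=
      fun _ _ _ => rfl
    have hlast : ∀ y, HasSubgaussianMGF (fun x => f (E.symm (x, y)) -
        ∫ x', f (E.symm (x', y)) ∂μ₁) ((c (Fin.last N) / 2) ^ 2) μ₁ := fun y =>
      hasSubgaussianMGF_sub_integral_of_abs_sub_le μ₁ fun x x' =>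
        hf _ _ _ fun i hi => by simp only [hE_symm, dif_neg (show ¬p i from hi)]
    have hrest := ih (fun i : {i // ¬p i} => ν i) (fun i => (block i).castPred i.2)
      (f := fun y => ∫ x, f (E.symm (x, y)) ∂μ₁) (c := fun k => c k.castSucc)
      fun k y y' hyy' => abs_integral_sub_integral_le Integrable.of_finite Integrable.of_finite
        fun x => hf _ _ _ fun i hi => by
          by_cases hpi : p i
          · simp only [hE_symm, dif_pos hpi]
          · simp only [hE_symm, dif_neg hpi]
            exact hyy' ⟨i, hpi⟩ fun hk => hi (by simp [← hk])
    have hprod := hasSubgaussianMGF_sub_integral_prod (f := fun z => f (E.symm z)) hlast hrest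
    rw [← hE.map_eq] at hprod
    have hmean : ∫ z, f (E.symm z) ∂(Measure.pi ν).map E = ∫ x, f x ∂Measure.pi ν := by
      rw [hE.map_eq, ← hE.integral_comp']
      simp
    rw [Fin.sum_univ_castSucc, add_comm]
    simpa [Function.comp_def, hmean] using hprod.of_map hE.measurable.aemeasurable

lemma exists_subset_ncard_inter_eq {V : Type*} [Finite V] {T P : Set V} {a b : ℕ}
    (ha : a ≤ (T ∩ P).ncard) (hb : b ≤ (T \ P).ncard) :
    ∃ T' ⊆ T, (T' ∩ P).ncard = a ∧ T'.ncard = a + b := by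
  obtain ⟨A, hA, rfl⟩ := Set.exists_subset_card_eq ha
  obtain ⟨B, hB, rfl⟩ := Set.exists_subset_card_eq hb
  have hAP : A ⊆ P := hA.trans Set.inter_subset_right
  have hBP : Disjoint B P := Set.disjoint_of_subset_left hB Set.disjoint_sdiff_left
  refine ⟨A ∪ B, Set.union_subset (hA.trans Set.inter_subset_left) (hB.trans Set.sdiff_subset),
    ?_, Set.ncard_union_eq (Set.disjoint_of_subset_left hAP hBP.symm)⟩
  rw [Set.union_inter_distrib_right, Set.inter_eq_left.mpr hAP, hBP.inter_eq, Set.union_empty]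

lemma ncard_le_ncard_add_one_of_subsingleton_sdiff {α : Type*} [Finite α] {s t : Set α}
    (h : (s \ t).Subsingleton) : s.ncard ≤ t.ncard + 1 :=
  (Set.ncard_le_ncard_sdiff_add_ncard s t).trans
    (by rw [add_comm]; gcongr; exact Set.ncard_le_one_iff_subsingleton.mpr h)

lemma exists_balanced_counts {γ : ℝ} (hγ0 : 0 < γ) (hγ1 : γ ≤ 1 / 2) {L R L₁ R₁ : ℕ}
    (hbal : |(L : ℝ) - γ * (L + R)| < 1) (hL₁ : L₁ ≤ L) (hL : L ≤ L₁ + 1) (hR₁ : R₁ ≤ R)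
    (hR : R ≤ R₁ + 1) :
    ∃ L₂ ≤ L₁, ∃ R₂ ≤ R₁, |(L₂ : ℝ) - γ * (L₂ + R₂)| < 1 ∧
      (L : ℝ) + R ≤ L₂ + R₂ + (2 + 1 / γ) := by
  have hγinv : 2 ≤ 1 / γ := by rw [le_div_iff₀ hγ0]; linarith
  have hL' : (L₁ : ℝ) ≤ L ∧ (L : ℝ) ≤ L₁ + 1 := ⟨by exact_mod_cast hL₁, by exact_mod_cast hL⟩
  have hR' : (R₁ : ℝ) ≤ R ∧ (R : ℝ) ≤ R₁ + 1 := ⟨by exact_mod_cast hR₁, by exact_mod_cast hR⟩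
  obtain ⟨hbal₁, hbal₂⟩ := abs_lt.mp hbal
  set D := (L₁ : ℝ) - γ * (L₁ + R₁)
  have hDlo : γ - 2 < D := by nlinarith
  have hDhi : D < 1 + γ := by nlinarith
  rcases lt_or_ge D 1 with hD1 | hD1
  · rcases lt_or_ge (-1) D with hD2 | hD2
    · exact ⟨L₁, le_rfl, R₁, le_rfl, abs_lt.mpr ⟨hD2, hD1⟩, by linarith⟩
    · -- remove the least number `j + 1` of right vertices that lifts `D` above `-1`
      set j := ⌊(-1 - D) / γ⌋₊
      have hj : (j : ℝ) * γ ≤ -1 - D :=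
        (le_div_iff₀ hγ0).mp (Nat.floor_le (div_nonneg (by linarith) hγ0.le))
      have hj' : -1 - D < (j + 1) * γ := (div_lt_iff₀ hγ0).mp (Nat.lt_floor_add_one _)
      have hjR : j + 1 ≤ R₁ := by
        have : (j : ℝ) * γ < R₁ * γ := by nlinarith [Nat.cast_nonneg (α := ℝ) L₁]
        exact_mod_cast lt_of_mul_lt_mul_right this hγ0.le
      refine ⟨L₁, le_rfl, R₁ - (j + 1), Nat.sub_le _ _, ?_, ?_⟩
      · push_cast [hjR]
        rw [abs_lt]
        constructor <;> nlinarith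
      · have : ((j : ℝ) + 1) ≤ 1 / γ := by rw [le_div_iff₀ hγ0]; linarith
        push_cast [hjR]
        linarith
  · have hL1 : 1 ≤ L₁ := by
      by_contra h
      have : (L₁ : ℝ) = 0 := by exact_mod_cast Nat.lt_one_iff.mp (not_le.mp h)
      nlinarith [Nat.cast_nonneg (α := ℝ) R₁]
    refine ⟨L₁ - 1, Nat.sub_le _ _, R₁, le_rfl, ?_, ?_⟩
    · push_cast [hL1]
      rw [abs_lt]
      constructor <;> nlinarith
    · push_cast [hL1]
      linarith

section BipartiteGraph

variable {n m' : ℕ} {γ : ℝ} {A : Fin (n * n) → Bool} {S T : Set (Vtx n)}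

lemma isIndepSet_iff : IsIndepSet n A S ↔
    ∀ i j : Fin n, Sum.inl i ∈ S → Sum.inr j ∈ S → A (finProdFinEquiv (i, j)) = false := by
  constructor
  · intro h i j hi hj
    simpa [adjB] using h _ hi _ hj
  · rintro h (i | i) hu (j | j) hv
    · simp [adjB]
    · simp [adjB, h i j hu hv]
    · simp [adjB, h j i hv hu]
    · simp [adjB]

lemma IsIndepSet.mono (h : IsIndepSet n A S) (hTS : T ⊆ S) : IsIndepSet n A T :=
  fun u hu v hv => h u (hTS hu) v (hTS hv)

lemma InBlocks.mono (h : InBlocks n m' S) (hTS : T ⊆ S) : InBlocks n m' T :=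
  fun v hv => h v (hTS hv)

lemma OnePerBlock.mono (h : OnePerBlock n m' S) (hTS : T ⊆ S) : OnePerBlock n m' T :=
  ⟨fun i j hi hj => h.1 i j (hTS hi) (hTS hj), fun i j hi hj => h.2 i j (hTS hi) (hTS hj)⟩

lemma isPBalIndep_empty : IsPBalIndep γ n m' A ∅ :=
  ⟨fun _ h => h.elim, by simp [IsBalanced, leftPart], fun _ h => h.elim,
    fun _ _ h => h.elim, fun _ _ h => h.elim⟩

lemma bddAbove_ncard_isPBalIndep :
    BddAbove {k | ∃ S : Set (Vtx n), IsPBalIndep γ n m' A S ∧ S.ncard = k} :=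
  ⟨Nat.card (Vtx n), by
    rintro _ ⟨S, -, rfl⟩
    exact Set.ncard_le_card S⟩

lemma exists_isPBalIndep_ncard_eq_betaFn :
    ∃ S : Set (Vtx n), IsPBalIndep γ n m' A S ∧ S.ncard = betaFn γ n m' A := by
  refine Nat.sSup_mem ?_ bddAbove_ncard_isPBalIndep
  exact ⟨0, ∅, isPBalIndep_empty, Set.ncard_empty _⟩

lemma ncard_le_betaFn (h : IsPBalIndep γ n m' A S) : S.ncard ≤ betaFn γ n m' A :=
  le_csSup bddAbove_ncard_isPBalIndep ⟨S, h, rfl⟩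

lemma betaFn_eq_zero_of_div_eq_zero (h : n / m' = 0) : betaFn γ n m' A = 0 := by
  obtain ⟨S, hS, hSβ⟩ := exists_isPBalIndep_ncard_eq_betaFn (γ := γ) (m' := m') (A := A)
  rw [← hSβ, Set.ncard_eq_zero]
  exact Set.eq_empty_of_forall_notMem fun v hv => by simpa [h] using hS.2.2.1 v hv

theorem betaFn_le_betaFn_add (hγ0 : 0 < γ) (hγ1 : γ ≤ 1 / 2) (k : ℕ) {x y : Fin (n * n) → Bool}
    (hxy : ∀ i j : Fin n, (i : ℕ) / m' ≠ k → (j : ℕ) / m' ≠ k → (i : ℕ) < n / m' * m' →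
      (j : ℕ) < n / m' * m' → x (finProdFinEquiv (i, j)) = y (finProdFinEquiv (i, j))) :
    (betaFn γ n m' x : ℝ) ≤ betaFn γ n m' y + (2 + 1 / γ) := by
  obtain ⟨S, ⟨hSindep, hSbal, hSblocks, hSone⟩, hSβ⟩ :=
    exists_isPBalIndep_ncard_eq_betaFn (γ := γ) (m' := m') (A := x)
  set S₁ := {v ∈ S | vidx v / m' ≠ k}
  have hS₁S : S₁ ⊆ S := Set.sep_subset _ _
  have hblock : ∀ v ∈ S, v ∉ S₁ → vidx v / m' = k := fun v hv hv₁ => not_not.mp fun h => hv₁ ⟨hv, h⟩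
  have hS₁indep : IsIndepSet n y S₁ := by
    rw [isIndepSet_iff] at hSindep ⊢
    intro i j hi hj
    rw [← hxy i j hi.2 hj.2 (hSblocks _ hi.1) (hSblocks _ hj.1)]
    exact hSindep i j hi.1 hj.1
  set P := Set.range (Sum.inl : Fin n → Vtx n)
  have hleft : (S ∩ P).ncard ≤ (S₁ ∩ P).ncard + 1 := by
    refine ncard_le_ncard_add_one_of_subsingleton_sdiff ?_
    rintro _ ⟨⟨hiS, i, rfl⟩, hi⟩ _ ⟨⟨hjS, j, rfl⟩, hj⟩
    have hik := hblock _ hiS fun h => hi ⟨h, i, rfl⟩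
    have hjk := hblock _ hjS fun h => hj ⟨h, j, rfl⟩
    exact congrArg _ (hSone.1 i j hiS hjS (hik.trans hjk.symm))
  have hright : (S \ P).ncard ≤ (S₁ \ P).ncard + 1 := by
    refine ncard_le_ncard_add_one_of_subsingleton_sdiff ?_
    rintro (i | i) ⟨⟨hiS, hiP⟩, hi⟩ (j | j) ⟨⟨hjS, hjP⟩, hj⟩
    any_goals exact (hiP ⟨i, rfl⟩).elim
    any_goals exact (hjP ⟨j, rfl⟩).elim
    have hik := hblock _ hiS fun h => hi ⟨h, hiP⟩
    have hjk := hblock _ hjS fun h => hj ⟨h, hjP⟩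
    exact congrArg _ (hSone.2 i j hiS hjS (hik.trans hjk.symm))
  obtain ⟨L₂, hL₂, R₂, hR₂, hbal₂, hloss⟩ := exists_balanced_counts hγ0 hγ1
    (by simpa [IsBalanced, leftPart, ← Set.ncard_inter_add_ncard_sdiff_eq_ncard S P] using hSbal)
    (Set.ncard_le_ncard (Set.inter_subset_inter_left _ hS₁S)) hleft
    (Set.ncard_le_ncard (Set.sdiff_subset_sdiff_left hS₁S)) hright
  obtain ⟨S₂, hS₂S₁, hS₂left, hS₂card⟩ := exists_subset_ncard_inter_eq hL₂ hR₂
  have hS₂ : IsPBalIndep γ n m' y S₂ :=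
    ⟨hS₁indep.mono hS₂S₁, by
      change |((S₂ ∩ P).ncard : ℝ) - γ * S₂.ncard| < 1
      simpa [hS₂left, hS₂card] using hbal₂,
      hSblocks.mono (hS₂S₁.trans hS₁S), hSone.mono (hS₂S₁.trans hS₁S)⟩
  have hβy : ((L₂ + R₂ : ℕ) : ℝ) ≤ betaFn γ n m' y := by
    exact_mod_cast hS₂card ▸ ncard_le_betaFn hS₂
  rw [← hSβ, ← Set.ncard_inter_add_ncard_sdiff_eq_ncard S P]
  push_cast at hβy ⊢
  linarith

end BipartiteGraph

lemma isProbabilityMeasure_coin_s10 {p : ℝ} (h0 : 0 ≤ p) (h1 : p ≤ 1) :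
    IsProbabilityMeasure (coin p) :=
  ⟨by simp [coin, ← ENNReal.ofReal_add h0 (sub_nonneg.mpr h1)]⟩

-- Edges with both endpoints outside the blocks are put into the last block; they never matter.
def edgeBlock (n m' : ℕ) (e : Fin (n * n)) : ℕ :=
  min (min ((finProdFinEquiv.symm e).1 / m') ((finProdFinEquiv.symm e).2 / m')) (n / m' - 1)

lemma edgeBlock_finProdFinEquiv_ne {n m' k : ℕ} {i j : Fin n} (hi : (i : ℕ) / m' ≠ k)
    (hj : (j : ℕ) / m' ≠ k) (hiN : (i : ℕ) < n / m' * m') (hjN : (j : ℕ) < n / m' * m') :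
    edgeBlock n m' (finProdFinEquiv (i, j)) ≠ k := by
  have hi' := Nat.div_lt_of_lt_mul (hiN.trans_eq (mul_comm _ _))
  have hj' := Nat.div_lt_of_lt_mul (hjN.trans_eq (mul_comm _ _))
  simp only [edgeBlock, Equiv.symm_apply_apply]
  omega

theorem hasSubgaussianMGF_betaFn {γ : ℝ} (n m' : ℕ) (hγ0 : 0 < γ) (hγ1 : γ ≤ 1 / 2)
    (ν : Measure Bool) [IsProbabilityMeasure ν] :
    HasSubgaussianMGF
      (fun A => (betaFn γ n m' A : ℝ) - ∫ A', (betaFn γ n m' A' : ℝ) ∂Measure.pi fun _ => ν)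
      ((n / m' : ℕ) * ((2 + 1 / γ).toNNReal / 2) ^ 2) (Measure.pi fun _ => ν) := by
  rcases Nat.eq_zero_or_pos (n / m') with hN | hN
  · simp [hN, betaFn_eq_zero_of_div_eq_zero hN]
  have hblock : ∀ e, edgeBlock n m' e < n / m' := fun e => by unfold edgeBlock; omega
  have hβ := hasSubgaussianMGF_sub_integral_pi_of_bounded_differences (fun _ => ν)
    (fun e => ⟨edgeBlock n m' e, hblock e⟩) (f := fun A => (betaFn γ n m' A : ℝ))
    (c := fun _ => (2 + 1 / γ).toNNReal) fun k x y hxy => by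
      have hxy' : ∀ i j : Fin n, (i : ℕ) / m' ≠ k → (j : ℕ) / m' ≠ k → (i : ℕ) < n / m' * m' →
          (j : ℕ) < n / m' * m' → x (finProdFinEquiv (i, j)) = y (finProdFinEquiv (i, j)) :=
        fun i j hi hj hiN hjN =>
          hxy _ fun hk => edgeBlock_finProdFinEquiv_ne hi hj hiN hjN (congrArg Fin.val hk)
      rw [Real.coe_toNNReal _ (by positivity), abs_le]
      constructor
      · linarith [betaFn_le_betaFn_add hγ0 hγ1 k fun i j hi hj hiN hjN =>
          (hxy' i j hi hj hiN hjN).symm]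
      · linarith [betaFn_le_betaFn_add hγ0 hγ1 k hxy']
  simpa using hβ

theorem stmt10_general (γ : ℝ) (hγ0 : 0 < γ) (hγ1 : γ ≤ 1 / 2) (n : ℕ)
    (d : ℝ) (hd : 1 < d) (hdn : d ≤ (n : ℝ)) :
    ∀ t : ℝ, 0 < t →
      (edgeMeasure n d
          {A | t ≤ |(betaFn γ n (mblock d) A : ℝ) -
            ∫ A', (betaFn γ n (mblock d) A' : ℝ) ∂(edgeMeasure n d)|}
        ≤ ENNReal.ofReal
            (2 * Real.exp (-t ^ 2 / (4 * ((n / mblock d : ℕ) : ℝ) * (1 + 1 / γ) ^ 2)))) ∧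
      (((n / mblock d : ℕ) : ℝ) ≤ n * (Real.log d) ^ 2 / d →
        edgeMeasure n d
            {A | t ≤ |(betaFn γ n (mblock d) A : ℝ) -
              ∫ A', (betaFn γ n (mblock d) A' : ℝ) ∂(edgeMeasure n d)|}
          ≤ ENNReal.ofReal
              (2 * Real.exp (-t ^ 2 * d /
                (4 * (1 + 1 / γ) ^ 2 * (Real.log d) ^ 2 * n)))) := by
  intro t ht
  have : IsProbabilityMeasure (coin (d / n)) :=
    isProbabilityMeasure_coin_s10 (by positivity) (div_le_one_of_le₀ hdn n.cast_nonneg)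
  have hβ := hasSubgaussianMGF_betaFn n (mblock d) hγ0 hγ1 (coin (d / n))
  have hc : ((((n / mblock d : ℕ) * ((2 + 1 / γ).toNNReal / 2) ^ 2 : ℝ≥0)) : ℝ) ≤
      (n / mblock d : ℕ) * (2 * (1 + 1 / γ) ^ 2) := by
    push_cast [Real.coe_toNNReal _ (by positivity : (0 : ℝ) ≤ 2 + 1 / γ)]
    gcongr
    nlinarith [(by positivity : (0 : ℝ) ≤ 1 / γ)]
  refine ⟨(hβ.measure_abs_ge_le hc ht.le).trans_eq ?_, fun hN => ?_⟩
  · congr 3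
    ring
  · have hc' : _ ≤ n * log d ^ 2 / d * (2 * (1 + 1 / γ) ^ 2) := hc.trans (by gcongr)
    refine (hβ.measure_abs_ge_le hc' ht.le).trans_eq ?_
    have hd0 : d ≠ 0 := by positivity
    congr 3
    field_simp
    ring

/-- concentration of `β` around its mean `β̄` via Azuma's inequality:
`P[|β − β̄| ≥ t] ≤ 2·exp(−t²/(4·n′·(1+1/γ)²))`, and in particular, whenever
`n′ ≤ n·(log d)²/d`, also `P[|β − β̄| ≥ t] ≤ 2·exp(−t²·d/(4·(1+1/γ)²·(log d)²·n))`. -/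
theorem stmt10 (γ : ℝ) (hγ0 : 0 < γ) (hγ1 : γ ≤ 1 / 2) (n : ℕ) (hn : 1 ≤ n)
    (d : ℝ) (hd : 1 < d) (hdn : d ≤ (n : ℝ)) (hm : 1 ≤ mblock d) :
    ∀ t : ℝ, 0 < t →
      (edgeMeasure n d
          {A | t ≤ |(betaFn γ n (mblock d) A : ℝ) -
            ∫ A', (betaFn γ n (mblock d) A' : ℝ) ∂(edgeMeasure n d)|}
        ≤ ENNReal.ofReal
            (2 * Real.exp (-t ^ 2 / (4 * ((n / mblock d : ℕ) : ℝ) * (1 + 1 / γ) ^ 2)))) ∧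
      (((n / mblock d : ℕ) : ℝ) ≤ n * (Real.log d) ^ 2 / d →
        edgeMeasure n d
            {A | t ≤ |(betaFn γ n (mblock d) A : ℝ) -
              ∫ A', (betaFn γ n (mblock d) A' : ℝ) ∂(edgeMeasure n d)|}
          ≤ ENNReal.ofReal
              (2 * Real.exp (-t ^ 2 * d /
                (4 * (1 + 1 / γ) ^ 2 * (Real.log d) ^ 2 * n)))) :=
  stmt10_general γ hγ0 hγ1 n d hd hdn
end
end

section
/- Fix an integer s ≥ 1 and a real d > 0. There exist constants c > 0 and t₀ > 0, depending only on s and d, such that for every integer n with d ≤ n, every vertex u of G^{bip}_{n,d}, and every real t ≥ t₀, the probability that the number of vertices at graph distance at most s from u in G^{bip}_{n,d} is at least t is at most s·exp(−c·t^{1/s}). -/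
open MeasureTheory Real Filter

noncomputable section

/-- The bipartite graph encoded by the edge-indicator vector `A`, as a `SimpleGraph`. -/
def bipGraph (n : ℕ) (A : Fin (n * n) → Bool) : SimpleGraph (Vtx n) where
  Adj u v := adjB n A u v
  symm := ⟨by rintro (i | i) (j | j) h <;> simp_all [adjB]⟩
  loopless := ⟨by rintro (i | i) h <;> simp_all [adjB]⟩

/-- The set of vertices at graph distance at most `s` from `u`. -/
def ball (n : ℕ) (A : Fin (n * n) → Bool) (u : Vtx n) (s : ℕ) : Set (Vtx n) :=
  {v | ∃ w : (bipGraph n A).Walk u v, w.length ≤ s}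

/-! If at least `t = x ^ s` vertices lie within distance `s` of `u`, then, since a ball whose
vertices have degree at most `D` has at most `(D + 1) ^ s` elements, some vertex `v` of the ball
has degree about `x`. A shortest path from `u` to `v` (length `ℓ ≤ s`) together with
`m ≈ x - s` neighbours of `v` off the path is a broom: a tree with exactly `ℓ + m` edges, all
present in the graph. A union bound over the at most `(2n) ^ ℓ * (2n).choose m` brooms gives
probability at most `∑ ℓ ≤ s, (2d) ^ ℓ * (2d) ^ m / m!`, and `(2d) ^ m / m! ≤ e ^ (2ed) * e ^ (-m)`
is of order `e ^ (-x)`. -/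

namespace SimpleGraph

variable {V : Type*} (G : SimpleGraph V)

def closedBall (u : V) (r : ℕ) : Set V := {v | ∃ p : G.Walk u v, p.length ≤ r}

variable {G}

lemma closedBall_mono {u : V} {r r' : ℕ} (h : r ≤ r') : G.closedBall u r ⊆ G.closedBall u r' :=
  fun _ ⟨p, hp⟩ => ⟨p, hp.trans h⟩

lemma closedBall_zero (u : V) : G.closedBall u 0 = {u} := by
  ext v
  refine ⟨fun ⟨p, hp⟩ => (Walk.length_eq_zero_iff.1 (Nat.le_zero.1 hp)).eq.symm, ?_⟩
  rintro rfl
  exact ⟨.nil, le_rfl⟩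

lemma closedBall_succ_subset (u : V) (r : ℕ) :
    G.closedBall u (r + 1) ⊆ ⋃ b ∈ G.closedBall u r, insert b (G.neighborSet b) := by
  rintro v ⟨p, hp⟩
  simp only [Set.mem_iUnion, Set.mem_insert_iff, mem_neighborSet]
  by_cases hnil : p.Nil
  · exact ⟨v, ⟨p, by rw [Walk.length_eq_zero_iff.2 hnil]; omega⟩, Or.inl rfl⟩
  · refine ⟨p.penultimate, ⟨p.dropLast, ?_⟩, Or.inr (p.adj_penultimate hnil)⟩
    rw [Walk.length_dropLast]
    omega

variable (G) in
structure IsBroom {ℓ : ℕ} (f : Fin (ℓ + 1) → V) (S : Finset V) : Prop where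
  injective : Function.Injective f
  adj_succ (i : Fin ℓ) : G.Adj (f i.castSucc) (f i.succ)
  adj_last {w : V} : w ∈ S → G.Adj (f (Fin.last ℓ)) w
  notMem_range {w : V} : w ∈ S → w ∉ Set.range f

variable (G) in
def HasBroom (u : V) (r m : ℕ) : Prop :=
  ∃ ℓ ≤ r, ∃ g : Fin ℓ → V, ∃ S : Finset V, S.card = m ∧ G.IsBroom (Fin.cons u g) S

def broomEdges [DecidableEq V] {ℓ : ℕ} (f : Fin (ℓ + 1) → V) (S : Finset V) : Finset (Sym2 V) :=
  (Finset.univ.image fun i : Fin ℓ => s(f i.castSucc, f i.succ)) ∪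
    S.image fun w => s(f (Fin.last ℓ), w)

namespace IsBroom

variable [DecidableEq V] {ℓ : ℕ} {f : Fin (ℓ + 1) → V} {S : Finset V}

lemma broomEdges_subset_edgeSet (h : G.IsBroom f S) : ↑(broomEdges f S) ⊆ G.edgeSet := by
  intro e he
  simp only [broomEdges, Finset.coe_union, Finset.coe_image, Finset.coe_univ, Set.image_univ,
    Set.mem_union, Set.mem_range, Set.mem_image, Finset.mem_coe] at he
  rcases he with ⟨i, rfl⟩ | ⟨w, hw, rfl⟩
  · exact h.adj_succ i
  · exact h.adj_last hw

lemma card_broomEdges (h : G.IsBroom f S) : (broomEdges f S).card = ℓ + S.card := by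
  have hpath : Function.Injective fun i : Fin ℓ => s(f i.castSucc, f i.succ) := by
    intro i j hij
    rcases Sym2.eq_iff.1 hij with ⟨h₁, _⟩ | ⟨h₁, h₂⟩
    · exact Fin.castSucc_injective _ (h.injective h₁)
    · have e₁ := congrArg Fin.val (h.injective h₁)
      have e₂ := congrArg Fin.val (h.injective h₂)
      simp only [Fin.val_castSucc, Fin.val_succ] at e₁ e₂
      omega
  have hstar : Set.InjOn (fun w => s(f (Fin.last ℓ), w)) S :=
    fun _ _ _ _ hvw => Sym2.congr_right.1 hvw
  have hdisj : Disjoint (Finset.univ.image fun i : Fin ℓ => s(f i.castSucc, f i.succ))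
      (S.image fun w => s(f (Fin.last ℓ), w)) := by
    simp only [Finset.disjoint_left, Finset.mem_image, Finset.mem_univ, true_and]
    rintro _ ⟨i, rfl⟩ ⟨w, hw, hiw⟩
    have hw' : w ∈ s(f i.castSucc, f i.succ) := hiw ▸ Sym2.mem_mk_right _ _
    rcases Sym2.mem_iff.1 hw' with rfl | rfl
    · exact h.notMem_range hw ⟨_, rfl⟩
    · exact h.notMem_range hw ⟨_, rfl⟩
  rw [broomEdges, Finset.card_union_of_disjoint hdisj, Finset.card_image_of_injective _ hpath,
    Finset.card_image_of_injOn hstar, Finset.card_univ, Fintype.card_fin]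

end IsBroom

lemma Walk.IsPath.isBroom_getVert {u v : V} {p : G.Walk u v} (hp : p.IsPath) {S : Finset V}
    (hS : ∀ w ∈ S, G.Adj v w ∧ w ∉ p.support) :
    G.IsBroom (fun i : Fin (p.length + 1) => p.getVert i) S where
  injective i j hij := Fin.ext (hp.getVert_injOn (by simp [Nat.lt_succ_iff.1 i.2])
    (by simp [Nat.lt_succ_iff.1 j.2]) hij)
  adj_succ i := p.adj_getVert_succ i.2
  adj_last hw := by simpa using (hS _ hw).1
  notMem_range hw := by
    rintro ⟨i, hi⟩
    exact (hS _ hw).2 (hi ▸ p.getVert_mem_support i)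

variable [Finite V]

lemma ncard_closedBall_succ_le {u : V} {r D : ℕ}
    (hdeg : ∀ v ∈ G.closedBall u r, (G.neighborSet v).ncard ≤ D) :
    (G.closedBall u (r + 1)).ncard ≤ (G.closedBall u r).ncard * (D + 1) := by
  set T := (G.closedBall u r).toFinite.toFinset
  calc (G.closedBall u (r + 1)).ncard
      ≤ (⋃ b ∈ T, insert b (G.neighborSet b)).ncard :=
        Set.ncard_le_ncard (by simpa [T] using closedBall_succ_subset u r) (Set.toFinite _)
    _ ≤ ∑ b ∈ T, (insert b (G.neighborSet b)).ncard := T.set_ncard_biUnion_le _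
    _ ≤ ∑ _b ∈ T, (D + 1) := Finset.sum_le_sum fun b hb =>
        (Set.ncard_insert_le _ _).trans (by simpa using hdeg b (by simpa [T] using hb))
    _ = (G.closedBall u r).ncard * (D + 1) := by
        rw [Finset.sum_const, smul_eq_mul, Set.ncard_eq_toFinset_card _ (Set.toFinite _)]

lemma ncard_closedBall_le {u : V} {r D : ℕ}
    (hdeg : ∀ v ∈ G.closedBall u r, (G.neighborSet v).ncard ≤ D) :
    (G.closedBall u r).ncard ≤ (D + 1) ^ r := by
  suffices ∀ i ≤ r, (G.closedBall u i).ncard ≤ (D + 1) ^ i from this r le_rfl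
  intro i hi
  induction i with
  | zero => simp [closedBall_zero]
  | succ i ih =>
    calc (G.closedBall u (i + 1)).ncard ≤ (G.closedBall u i).ncard * (D + 1) :=
          ncard_closedBall_succ_le fun v hv => hdeg v (closedBall_mono (by omega) hv)
      _ ≤ (D + 1) ^ i * (D + 1) := Nat.mul_le_mul_right _ (ih (by omega))
      _ = (D + 1) ^ (i + 1) := (pow_succ _ _).symm

lemma exists_lt_ncard_neighborSet_of_lt_ncard_closedBall {u : V} {r D : ℕ}
    (h : (D + 1) ^ r < (G.closedBall u r).ncard) :
    ∃ v ∈ G.closedBall u r, D < (G.neighborSet v).ncard := by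
  by_contra! hdeg
  exact h.not_ge (ncard_closedBall_le hdeg)

lemma hasBroom_of_lt_ncard_closedBall {u : V} {r m : ℕ}
    (h : (m + r + 1) ^ r < (G.closedBall u r).ncard) : G.HasBroom u r m := by
  classical
  obtain ⟨v, ⟨p, hpr⟩, hdeg⟩ := exists_lt_ncard_neighborSet_of_lt_ncard_closedBall h
  have hP := p.bypass_isPath
  have hlen : p.bypass.length ≤ r := (p.length_bypass_le_length).trans hpr
  have hfresh : m ≤ ((G.neighborSet v).toFinite.toFinset \ p.bypass.support.toFinset).card := by
    have := Finset.le_card_sdiff p.bypass.support.toFinset (G.neighborSet v).toFinite.toFinset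
    have := p.bypass.support.toFinset_card_le
    rw [← Set.ncard_eq_toFinset_card _, Walk.length_support] at *
    omega
  obtain ⟨S, hSsub, hScard⟩ := Finset.exists_subset_card_eq hfresh
  have hS : ∀ w ∈ S, G.Adj v w ∧ w ∉ p.bypass.support := fun w hw => by
    simpa using hSsub hw
  refine ⟨p.bypass.length, hlen, Fin.tail fun i => p.bypass.getVert i, S, hScard, ?_⟩
  convert hP.isBroom_getVert hS using 1
  simpa using Fin.cons_self_tail fun i : Fin (p.bypass.length + 1) => p.bypass.getVert i

end SimpleGraph

instance (p : ℝ) : IsFiniteMeasure (coin p) := by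
  constructor
  simp [coin, ENNReal.add_lt_top]

lemma coin_singleton_true (p : ℝ) : coin p {true} = ENNReal.ofReal p := by
  simp [coin]

lemma coin_univ {p : ℝ} (hp₀ : 0 ≤ p) (hp₁ : p ≤ 1) : coin p Set.univ = 1 := by
  simp [coin, ← ENNReal.ofReal_add hp₀ (sub_nonneg.2 hp₁)]

lemma pi_coin_forall_eq_true {ι : Type*} [Fintype ι] {p : ℝ} (hp₀ : 0 ≤ p) (hp₁ : p ≤ 1)
    (C : Finset ι) :
    Measure.pi (fun _ : ι => coin p) {A | ∀ c ∈ C, A c = true} = ENNReal.ofReal (p ^ C.card) := by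
  classical
  have hcyl : {A : ι → Bool | ∀ c ∈ C, A c = true} =
      Set.univ.pi fun c => if c ∈ C then {true} else Set.univ := by
    ext A
    simp only [Set.mem_pi, Set.mem_univ, true_implies]
    refine forall_congr' fun c => ?_
    split_ifs with hc <;> simp [hc]
  rw [hcyl, Measure.pi_pi]
  simp_rw [apply_ite (coin p), coin_singleton_true, coin_univ hp₀ hp₁]
  rw [Finset.prod_ite_mem, Finset.univ_inter, Finset.prod_const, ENNReal.ofReal_pow hp₀]

def bipEdge (n : ℕ) (c : Fin (n * n)) : Sym2 (Vtx n) :=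
  s(Sum.inl (finProdFinEquiv.symm c).1, Sum.inr (finProdFinEquiv.symm c).2)

lemma bipEdge_injective (n : ℕ) : Function.Injective (bipEdge n) := by
  intro c c' h
  simp only [bipEdge, Sym2.eq_iff, Sum.inl.injEq, Sum.inr.injEq, reduceCtorEq, and_false,
    or_false] at h
  exact finProdFinEquiv.symm.injective (Prod.ext h.1 h.2)

lemma mem_edgeSet_bipGraph {n : ℕ} {A : Fin (n * n) → Bool} {e : Sym2 (Vtx n)} :
    e ∈ (bipGraph n A).edgeSet ↔ ∃ c, A c = true ∧ bipEdge n c = e := by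
  induction e using Sym2.ind with
  | h a b =>
    rw [finProdFinEquiv.symm.exists_congr_left]
    rcases a with i | j <;> rcases b with i' | j' <;> simp [bipGraph, adjB, bipEdge]

lemma edgeMeasure_edgeSet_superset_le {n : ℕ} {d : ℝ} (hd : 0 ≤ d) (hdn : d ≤ n)
    (F : Finset (Sym2 (Vtx n))) :
    edgeMeasure n d {A | ↑F ⊆ (bipGraph n A).edgeSet} ≤ ENNReal.ofReal ((d / n) ^ F.card) := by
  classical
  rcases Set.eq_empty_or_nonempty {A | ↑F ⊆ (bipGraph n A).edgeSet} with h | ⟨A₀, hA₀⟩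
  · simp [h]
  set C := Finset.univ.filter fun c => bipEdge n c ∈ F
  have hCF : C.image (bipEdge n) = F := by
    ext e
    simp only [C, Finset.mem_image, Finset.mem_filter, Finset.mem_univ, true_and]
    refine ⟨fun ⟨c, hc, he⟩ => he ▸ hc, fun he => ?_⟩
    obtain ⟨c, -, rfl⟩ := mem_edgeSet_bipGraph.1 (hA₀ he)
    exact ⟨c, he, rfl⟩
  have hsub : {A | ↑F ⊆ (bipGraph n A).edgeSet} ⊆ {A | ∀ c ∈ C, A c = true} := by
    intro A hA c hc
    obtain ⟨c', hc', he⟩ := mem_edgeSet_bipGraph.1 (hA (Finset.mem_filter.1 hc).2)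
    rwa [bipEdge_injective n he] at hc'
  calc edgeMeasure n d {A | ↑F ⊆ (bipGraph n A).edgeSet}
      ≤ edgeMeasure n d {A | ∀ c ∈ C, A c = true} := measure_mono hsub
    _ = ENNReal.ofReal ((d / n) ^ F.card) := by
      rw [edgeMeasure,
        pi_coin_forall_eq_true (by positivity) (div_le_one_of_le₀ hdn (by positivity)), ← hCF, Finset.card_image_of_injective _ (bipEdge_injective n)]

def broomBound (n : ℕ) (d : ℝ) (r m : ℕ) : ℝ :=
  ∑ ℓ ∈ Finset.range (r + 1), ((n + n) ^ ℓ * (n + n).choose m : ℕ) * (d / n) ^ (ℓ + m)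

open SimpleGraph in
lemma edgeMeasure_hasBroom_le {n : ℕ} {d : ℝ} (hd : 0 ≤ d) (hdn : d ≤ n) (u : Vtx n) (r m : ℕ) :
    edgeMeasure n d {A | (bipGraph n A).HasBroom u r m} ≤
      ENNReal.ofReal (broomBound n d r m) := by
  classical
  set E : (ℓ : ℕ) → (Fin ℓ → Vtx n) → Finset (Vtx n) → Set (Fin (n * n) → Bool) :=
    fun ℓ g S => {A | ↑(broomEdges (Fin.cons u g : Fin (ℓ + 1) → Vtx n) S) ⊆
      (bipGraph n A).edgeSet ∧ (broomEdges (Fin.cons u g : Fin (ℓ + 1) → Vtx n) S).card = ℓ + m}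
  have hsub : {A | (bipGraph n A).HasBroom u r m} ⊆
      ⋃ ℓ ∈ Finset.range (r + 1), ⋃ g, ⋃ S ∈ Finset.univ.powersetCard m, E ℓ g S := by
    rintro A ⟨ℓ, hℓ, g, S, hS, hbroom⟩
    simp only [Set.mem_iUnion, Finset.mem_range, Finset.mem_powersetCard, exists_prop]
    exact ⟨ℓ, by omega, g, S, ⟨Finset.subset_univ S, hS⟩,
      hbroom.broomEdges_subset_edgeSet, hS ▸ hbroom.card_broomEdges⟩
  have hE : ∀ ℓ g S, edgeMeasure n d (E ℓ g S) ≤ ENNReal.ofReal ((d / n) ^ (ℓ + m)) := by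
    intro ℓ g S
    by_cases hcard : (broomEdges (Fin.cons u g : Fin (ℓ + 1) → Vtx n) S).card = ℓ + m
    · simp only [E, hcard, and_true]
      exact hcard ▸ edgeMeasure_edgeSet_superset_le hd hdn _
    · simp [E, hcard]
  calc edgeMeasure n d {A | (bipGraph n A).HasBroom u r m}
      ≤ ∑ ℓ ∈ Finset.range (r + 1), ∑ g : Fin ℓ → Vtx n,
          ∑ S ∈ Finset.univ.powersetCard m, edgeMeasure n d (E ℓ g S) :=
        (measure_mono hsub).trans <| (measure_biUnion_finset_le _ _).trans <|
          Finset.sum_le_sum fun ℓ _ => (measure_iUnion_fintype_le _ _).trans <|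
            Finset.sum_le_sum fun g _ => measure_biUnion_finset_le _ _
    _ ≤ ∑ ℓ ∈ Finset.range (r + 1), ∑ _g : Fin ℓ → Vtx n,
          ∑ _S ∈ Finset.univ.powersetCard m, ENNReal.ofReal ((d / n) ^ (ℓ + m)) := by
        gcongr with ℓ _ g _ S _
        exact hE ℓ g S
    _ = _ := by
        rw [broomBound, ENNReal.ofReal_sum_of_nonneg fun ℓ _ => by positivity]
        simp [Finset.card_powersetCard, ENNReal.ofReal_mul, ENNReal.ofReal_add, mul_assoc]

open Nat in
lemma pow_div_factorial_le_exp_mul_exp_neg {y : ℝ} (hy : 0 ≤ y) (m : ℕ) :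
    y ^ m / m ! ≤ exp (exp 1 * y) * exp (-m) := by
  have h := Real.pow_div_factorial_le_exp (exp 1 * y) (by positivity) m
  rw [mul_pow, ← exp_nat_mul, mul_one, mul_div_assoc] at h
  calc y ^ m / m ! = exp (-m) * (exp m * (y ^ m / m !)) := by
        rw [← mul_assoc, ← exp_add, neg_add_cancel, exp_zero, one_mul]
    _ ≤ exp (-m) * exp (exp 1 * y) := by gcongr
    _ = exp (exp 1 * y) * exp (-m) := mul_comm _ _

lemma broomBound_le {n : ℕ} (hn : 0 < n) {d : ℝ} (hd : 0 ≤ d) (r m : ℕ) :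
    broomBound n d r m ≤ (r + 1) * max 1 (2 * d) ^ r * exp (exp 1 * (2 * d)) * exp (-m) := by
  have hn' : (0 : ℝ) < n := by exact_mod_cast hn
  have hnd : ((n + n : ℕ) : ℝ) * (d / n) = 2 * d := by
    push_cast
    field_simp
    ring
  have hpath : ∀ ℓ ≤ r, (((n + n) ^ ℓ : ℕ) : ℝ) * (d / n) ^ ℓ ≤ max 1 (2 * d) ^ r := by
    intro ℓ hℓ
    rw [Nat.cast_pow, ← mul_pow, hnd]
    calc (2 * d) ^ ℓ ≤ max 1 (2 * d) ^ ℓ := by gcongr; exact le_max_right _ _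
      _ ≤ max 1 (2 * d) ^ r := pow_le_pow_right₀ (le_max_left _ _) hℓ
  have hstar : ((n + n).choose m : ℝ) * (d / n) ^ m ≤ exp (exp 1 * (2 * d)) * exp (-m) :=
    calc ((n + n).choose m : ℝ) * (d / n) ^ m
        ≤ ((n + n : ℕ) : ℝ) ^ m / m.factorial * (d / n) ^ m := by
          gcongr
          exact Nat.choose_le_pow_div m (n + n)
      _ = (2 * d) ^ m / m.factorial := by rw [← hnd, mul_pow]; ring
      _ ≤ exp (exp 1 * (2 * d)) * exp (-m) :=
          pow_div_factorial_le_exp_mul_exp_neg (by positivity) m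
  calc broomBound n d r m
      = ∑ ℓ ∈ Finset.range (r + 1), ((((n + n) ^ ℓ : ℕ) : ℝ) * (d / n) ^ ℓ) *
          (((n + n).choose m : ℝ) * (d / n) ^ m) := by
        rw [broomBound]
        refine Finset.sum_congr rfl fun ℓ _ => ?_
        rw [Nat.cast_mul, pow_add]
        ring
    _ ≤ ∑ _ℓ ∈ Finset.range (r + 1), max 1 (2 * d) ^ r * (exp (exp 1 * (2 * d)) * exp (-m)) :=
        Finset.sum_le_sum fun ℓ hℓ => mul_le_mul (hpath ℓ (by simpa [Nat.lt_succ_iff] using hℓ))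
          hstar (by positivity) (by positivity)
    _ = _ := by rw [Finset.sum_const, Finset.card_range, nsmul_eq_mul]; push_cast; ring

lemma exists_nat_add_lt_and_sub_le {x : ℝ} {k : ℕ} (hx : k ≤ x) :
    ∃ m : ℕ, (m + k : ℝ) < x + 1 ∧ x - k ≤ m := by
  have hk : k ≤ ⌈x⌉₊ := by exact_mod_cast hx.trans (Nat.le_ceil x)
  refine ⟨⌈x⌉₊ - k, ?_, ?_⟩ <;> push_cast [Nat.cast_sub hk]
  · linarith [Nat.ceil_lt_add_one ((Nat.cast_nonneg k).trans hx)]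
  · linarith [Nat.le_ceil x]

lemma mul_exp_neg_le_of_le {a C K x : ℝ} {m : ℕ} (ha : 1 ≤ a) (hC : 0 ≤ C)
    (hx : 2 * (C * exp K) ≤ x) (hm : x - K ≤ m) : C * exp (-m) ≤ a * exp (-(1 / 2) * x) := by
  have hCK : C * exp K ≤ exp (x / 2) := by linarith [add_one_le_exp (x / 2)]
  calc C * exp (-m) ≤ C * exp K * exp (-x) := by
        rw [mul_assoc, ← exp_add]
        gcongr
        linarith
    _ ≤ exp (x / 2) * exp (-x) := by gcongr
    _ = 1 * exp (-(1 / 2) * x) := by rw [← exp_add, one_mul]; ring_nf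
    _ ≤ a * exp (-(1 / 2) * x) := by gcongr

/-- Fix an integer `s ≥ 1` and a real `d > 0`. There are constants `c > 0` and
`t₀ > 0` (depending only on `s` and `d`) such that for every `n` with `d ≤ n`, every vertex
`u` and every `t ≥ t₀`, the probability that the number of vertices at distance at most `s`
from `u` is at least `t` is at most `s·exp(−c·t^{1/s})`. -/
theorem stmt14 (s : ℕ) (hs : 1 ≤ s) (d : ℝ) (hd : 0 < d) :
    ∃ c : ℝ, 0 < c ∧ ∃ t₀ : ℝ, 0 < t₀ ∧
      ∀ n : ℕ, d ≤ (n : ℝ) → ∀ u : Vtx n, ∀ t : ℝ, t₀ ≤ t →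
        edgeMeasure n d {A | t ≤ ((ball n A u s).ncard : ℝ)} ≤
          ENNReal.ofReal ((s : ℝ) * Real.exp (-c * t ^ ((1 : ℝ) / s))) := by
  set C := ((s : ℝ) + 1) * max 1 (2 * d) ^ s * exp (exp 1 * (2 * d))
  set x₀ := 2 * (C * exp (s + 2)) + s + 2
  have hs₀ : s ≠ 0 := by omega
  have hx₀ : 0 < x₀ := by positivity
  refine ⟨1 / 2, by norm_num, x₀ ^ s, by positivity, fun n hdn u t ht => ?_⟩
  have ht₀ : 0 ≤ t := (by positivity : (0 : ℝ) ≤ x₀ ^ s).trans ht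
  set x := t ^ ((1 : ℝ) / s)
  have hxt : x ^ s = t := by simp only [x, one_div]; exact rpow_inv_natCast_pow ht₀ hs₀
  have hx : x₀ ≤ x := by
    rw [← pow_rpow_inv_natCast hx₀.le hs₀, ← one_div]
    exact rpow_le_rpow (by positivity) ht (by positivity)
  obtain ⟨m, hmx, hxm⟩ := exists_nat_add_lt_and_sub_le (x := x) (k := s + 2)
    (by push_cast; linarith [show 0 ≤ C * exp (s + 2) by positivity])
  push_cast at hmx hxm
  have hball : {A | t ≤ ((ball n A u s).ncard : ℝ)} ⊆ {A | (bipGraph n A).HasBroom u s m} :=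
    fun A hA => SimpleGraph.hasBroom_of_lt_ncard_closedBall <| by
      have hlt : ((m + s + 1 : ℕ) : ℝ) ^ s < (ball n A u s).ncard :=
        (pow_lt_pow_left₀ (by push_cast; linarith) (by positivity) hs₀).trans_le (hxt ▸ hA)
      exact_mod_cast hlt
  calc edgeMeasure n d {A | t ≤ ((ball n A u s).ncard : ℝ)}
      ≤ edgeMeasure n d {A | (bipGraph n A).HasBroom u s m} := measure_mono hball
    _ ≤ ENNReal.ofReal (broomBound n d s m) :=
        edgeMeasure_hasBroom_le hd.le hdn u s m
    _ ≤ ENNReal.ofReal (C * exp (-m)) :=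
        ENNReal.ofReal_le_ofReal (broomBound_le (by exact_mod_cast hd.trans_le hdn) hd.le s m)
    _ ≤ ENNReal.ofReal (s * exp (-(1 / 2) * x)) :=
        ENNReal.ofReal_le_ofReal <| mul_exp_neg_le_of_le (K := s + 2) (by exact_mod_cast hs)
          (by positivity) (by linarith) hxm
end
end
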